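/- (Zero Exclusion Principle) Let T ⊆ ℝ^l be a bounded, closed, connected set and let f(s,t) = Σ_{i=0}^n c_i(t) s^i be a polynomial whose complex coefficients c_i(t) depend continuously on t ∈ T and whose leading coefficient satisfies c_n(t) ≠ 0 for all t ∈ T. Then f(·,t) is Hurwitz stable for every t ∈ T if and only if (1) there exists t* ∈ T such that f(·,t*) is Hurwitz stable, and (2) f(jω, t) ≠ 0 for every ω ∈ ℝ and every t ∈ T. -/

import Mathlib

/-
The parameters `t` for which `f(·,t)` has a root with `Re z ≥ 0` form a closed set: near `t₀` the
Cauchy bound confines all roots to a fixed compact disc, on which `f(·,t₀)` has no such root,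
and the tube lemma propagates this to nearby `t`. If no `f(·,t)` vanishes on the imaginary axis,
the same set is the set of parameters with a root with `Re z > 0`, which is open: a root `z` of
`f(·,t₀)` forces a root of `f(·,t)` within `ε` of `z` as soon as `‖f(z,t)‖ < ‖c_n(t)‖ εⁿ`.
Being clopen in the connected set `T` and missing `t*`, it is empty.
-/

open Polynomial

/-- A polynomial is Hurwitz stable if all its complex roots have negative real part. -/
def Hurwitz (p : ℂ[X]) : Prop :=
  ∀ z : ℂ, p.IsRoot z → z.re < 0

/-- The polynomial `f(s,t) = ∑_{i=0}^n c_i(t) s^i`. -/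
noncomputable def tPoly (l n : ℕ) (c : ℕ → (Fin l → ℝ) → ℂ) (t : Fin l → ℝ) : ℂ[X] :=
  ∑ i ∈ Finset.range (n + 1), Polynomial.C (c i t) * Polynomial.X ^ i

open Filter Topology NNReal Metric

namespace Polynomial

variable {𝕜 : Type*} [NormedField 𝕜]

theorem exists_isRoot_norm_sub_lt [IsAlgClosed 𝕜] {q : 𝕜[X]} (hq : q ≠ 0) {z : 𝕜} {ε : ℝ}
    (hε : 0 ≤ ε) (h : ‖q.eval z‖ < ‖q.leadingCoeff‖ * ε ^ q.natDegree) :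
    ∃ r, q.IsRoot r ∧ ‖z - r‖ < ε := by
  by_contra! hfar
  have hsplit := IsAlgClosed.splits q
  have hprod : ε ^ q.natDegree ≤ (q.roots.map fun r => ‖z - r‖).prod := by
    rw [hsplit.natDegree_eq_card_roots, ← Multiset.prod_replicate, ← Multiset.map_const']
    exact Multiset.prod_map_le_prod_map₀ _ _ (fun _ _ => hε)
      fun r hr => hfar r ((mem_roots hq).mp hr)
  have heval : ‖q.eval z‖ = ‖q.leadingCoeff‖ * (q.roots.map fun r => ‖z - r‖).prod := by
    rw [hsplit.eval_eq_prod_roots, norm_mul]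
    exact congrArg _ (Multiset.prod_hom' q.roots normHom (z - ·)).symm
  exact h.not_ge (heval ▸ mul_le_mul_of_nonneg_left hprod (norm_nonneg _))

variable {X : Type*} [TopologicalSpace X] {p : X → 𝕜[X]} {n : ℕ}

theorem continuous_eval_of_continuous_coeff (hdeg : ∀ x, (p x).natDegree ≤ n)
    (hcoeff : ∀ i, Continuous fun x => (p x).coeff i) :
    Continuous fun q : X × 𝕜 => (p q.1).eval q.2 := by
  simp_rw [fun q : X × 𝕜 => eval_eq_sum_range' (Nat.lt_succ_of_le (hdeg q.1)) q.2]
  exact continuous_finsetSum _ fun i _ =>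
    ((hcoeff i).comp continuous_fst).mul (continuous_snd.pow i)

theorem isOpen_setOf_exists_isRoot_mem [IsAlgClosed 𝕜] (hdeg : ∀ x, (p x).degree = n)
    (hcoeff : ∀ i, Continuous fun x => (p x).coeff i) {U : Set 𝕜} (hU : IsOpen U) :
    IsOpen {x | ∃ z ∈ U, (p x).IsRoot z} := by
  refine isOpen_iff_mem_nhds.mpr fun x₀ ⟨z, hzU, hz⟩ => ?_
  obtain ⟨ε, hε, hball⟩ := Metric.isOpen_iff.mp hU z hzU
  have hnatDeg x : (p x).natDegree = n := natDegree_eq_of_degree_eq_some (hdeg x)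
  have hsmall : Tendsto (fun x => ‖(p x).eval z‖) (𝓝 x₀) (𝓝 0) := by
    simpa [hz.eq_zero] using
      ((continuous_eval_of_continuous_coeff (fun x => (hnatDeg x).le) hcoeff).comp
        (Continuous.prodMk_left z)).norm.tendsto x₀
  have hlead : Tendsto (fun x => ‖(p x).leadingCoeff‖ * ε ^ n) (𝓝 x₀)
      (𝓝 (‖(p x₀).leadingCoeff‖ * ε ^ n)) := by
    simp only [leadingCoeff, hnatDeg]
    exact ((hcoeff n).norm.tendsto x₀).mul_const _
  have hpos : 0 < ‖(p x₀).leadingCoeff‖ * ε ^ n := by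
    have : p x₀ ≠ 0 := ne_zero_of_coe_le_degree (hdeg x₀).ge
    exact mul_pos (norm_pos_iff.mpr (leadingCoeff_ne_zero.mpr this)) (pow_pos hε n)
  filter_upwards [hsmall.eventually_lt hlead hpos] with x hx
  obtain ⟨r, hr, hrz⟩ := exists_isRoot_norm_sub_lt (ne_zero_of_coe_le_degree (hdeg x).ge)
    hε.le (by rwa [hnatDeg])
  exact ⟨r, hball (by rwa [mem_ball', dist_eq_norm]), hr⟩

theorem continuous_cauchyBound_of_continuous_coeff (hdeg : ∀ x, (p x).degree = n)
    (hcoeff : ∀ i, Continuous fun x => (p x).coeff i) :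
    Continuous fun x => cauchyBound (p x) := by
  have hnatDeg x : (p x).natDegree = n := natDegree_eq_of_degree_eq_some (hdeg x)
  simp only [cauchyBound, leadingCoeff, hnatDeg]
  refine ((Continuous.finset_sup_apply fun i _ => (hcoeff i).nnnorm).div₀ (hcoeff n).nnnorm
    fun x => ?_).add continuous_const
  have : p x ≠ 0 := ne_zero_of_coe_le_degree (hdeg x).ge
  simpa [← hnatDeg x] using this

theorem isClosed_setOf_exists_isRoot_mem [ProperSpace 𝕜] (hdeg : ∀ x, (p x).degree = n)
    (hcoeff : ∀ i, Continuous fun x => (p x).coeff i) {F : Set 𝕜} (hF : IsClosed F) :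
    IsClosed {x | ∃ z ∈ F, (p x).IsRoot z} := by
  refine isOpen_compl_iff.mp (isOpen_iff_mem_nhds.mpr fun x₀ hx₀ => ?_)
  simp only [Set.mem_compl_iff, Set.mem_ofPred_eq, not_exists, not_and] at hx₀
  set R : ℝ≥0 := cauchyBound (p x₀) + 1
  have hbound : ∀ᶠ x in 𝓝 x₀, cauchyBound (p x) < R :=
    (continuous_cauchyBound_of_continuous_coeff hdeg hcoeff).continuousAt.eventually_lt
      continuousAt_const (lt_add_one _)
  have hK : IsCompact (F ∩ closedBall 0 R) := (isCompact_closedBall 0 R).inter_left hF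
  have hnonzero : ∀ᶠ x in 𝓝 x₀, ∀ z ∈ F ∩ closedBall 0 R, ¬ (p x).IsRoot z :=
    hK.eventually_forall_of_forall_eventually fun z hz =>
      (continuous_eval_of_continuous_coeff (fun x => (natDegree_eq_of_degree_eq_some (hdeg x)).le)
        hcoeff).continuousAt.eventually_ne (hx₀ z hz.1)
  filter_upwards [hbound, hnonzero] with x hxR hx
  rintro ⟨z, hzF, hz⟩
  refine hx z ⟨hzF, mem_closedBall_zero_iff.mpr ?_⟩ hz
  exact_mod_cast ((hz.norm_lt_cauchyBound (ne_zero_of_coe_le_degree (hdeg x).ge)).trans hxR).le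

end Polynomial

theorem Hurwitz.eval_ofReal_mul_I_ne_zero {p : ℂ[X]} (hp : Hurwitz p) (ω : ℝ) :
    p.eval (ω * Complex.I) ≠ 0 := fun h => by simpa using hp _ h

theorem not_hurwitz_iff {p : ℂ[X]} : ¬Hurwitz p ↔ ∃ z ∈ {z : ℂ | 0 ≤ z.re}, p.IsRoot z := by
  simp [Hurwitz, and_comm]

theorem Hurwitz.of_connectedSpace {X : Type*} [TopologicalSpace X] [ConnectedSpace X]
    {p : X → ℂ[X]} {n : ℕ} (hdeg : ∀ x, (p x).degree = n)
    (hcoeff : ∀ i, Continuous fun x => (p x).coeff i)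
    (haxis : ∀ x (ω : ℝ), (p x).eval (ω * Complex.I) ≠ 0) {x₀ : X} (h₀ : Hurwitz (p x₀))
    (x : X) : Hurwitz (p x) := by
  set S := {x | ∃ z ∈ {z : ℂ | 0 ≤ z.re}, (p x).IsRoot z}
  have hS : S = {x | ∃ z ∈ {z : ℂ | 0 < z.re}, (p x).IsRoot z} := by
    refine Set.ext fun x => exists_congr fun z => and_congr_left fun hz =>
      show 0 ≤ z.re ↔ 0 < z.re from ?_
    refine ⟨fun hre => hre.lt_of_ne fun hre0 => haxis x z.im ?_, le_of_lt⟩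
    rwa [← Complex.re_add_im z, ← hre0, Complex.ofReal_zero, zero_add] at hz
  have hclopen : IsClopen S :=
    ⟨isClosed_setOf_exists_isRoot_mem hdeg hcoeff
        (isClosed_le continuous_const Complex.continuous_re),
      hS ▸ isOpen_setOf_exists_isRoot_mem hdeg hcoeff
        (isOpen_lt continuous_const Complex.continuous_re)⟩
  have hx₀ : x₀ ∉ S := not_hurwitz_iff.not_right.mp h₀
  rcases isClopen_iff.mp hclopen with hempty | huniv
  · exact not_hurwitz_iff.not_right.mpr (hempty ▸ Set.notMem_empty x : x ∉ S)
  · exact absurd (huniv ▸ Set.mem_univ x₀) hx₀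

theorem tPoly_coeff (l n : ℕ) (c : ℕ → (Fin l → ℝ) → ℂ) (t : Fin l → ℝ) (i : ℕ) :
    (tPoly l n c t).coeff i = if i ≤ n then c i t else 0 := by
  simp [tPoly]

theorem tPoly_degree {l n : ℕ} {c : ℕ → (Fin l → ℝ) → ℂ} {t : Fin l → ℝ} (h : c n t ≠ 0) :
    (tPoly l n c t).degree = n :=
  degree_eq_of_le_of_coeff_ne_zero
    ((degree_sum_le _ _).trans (Finset.sup_le fun i hi => (degree_C_mul_X_pow_le i _).trans
      (by exact_mod_cast Finset.mem_range_succ_iff.mp hi)))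
    (by rwa [tPoly_coeff, if_pos le_rfl])

theorem zero_exclusion_principle_general (l n : ℕ) (T : Set (Fin l → ℝ))
    (hTconn : IsConnected T)
    (c : ℕ → (Fin l → ℝ) → ℂ)
    (hcont : ∀ i, ContinuousOn (c i) T)
    (hlead : ∀ t ∈ T, c n t ≠ 0) :
    (∀ t ∈ T, Hurwitz (tPoly l n c t)) ↔
      ((∃ t0 ∈ T, Hurwitz (tPoly l n c t0)) ∧
        ∀ ω : ℝ, ∀ t ∈ T, Polynomial.eval ((ω : ℂ) * Complex.I) (tPoly l n c t) ≠ 0) := by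
  refine ⟨fun h => ⟨?_, fun ω t ht => (h t ht).eval_ofReal_mul_I_ne_zero ω⟩, ?_⟩
  · obtain ⟨t, ht⟩ := hTconn.nonempty
    exact ⟨t, ht, h t ht⟩
  rintro ⟨⟨t₀, ht₀, h₀⟩, haxis⟩ t ht
  have : ConnectedSpace T := isConnected_iff_connectedSpace.mp hTconn
  have hcoeff i : Continuous fun t : T => (tPoly l n c t).coeff i := by
    simp only [tPoly_coeff]
    split_ifs
    exacts [(hcont i).domRestrict, continuous_const]
  exact Hurwitz.of_connectedSpace (p := fun t : T => tPoly l n c t)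
    (fun t => tPoly_degree (hlead t t.2)) hcoeff (fun t ω => haxis ω t t.2) (x₀ := ⟨t₀, ht₀⟩) h₀
    ⟨t, ht⟩

/-- Zero Exclusion Principle: for a bounded, closed, connected parameter set `T` and a
polynomial family `f(s,t)` of fixed degree `n` with coefficients continuous in `t`,
the whole family is Hurwitz stable iff one member is Hurwitz stable and no member
vanishes on the imaginary axis. -/
theorem zero_exclusion_principle (l n : ℕ) (T : Set (Fin l → ℝ))
    (hTb : Bornology.IsBounded T) (hTc : IsClosed T) (hTconn : IsConnected T)
    (c : ℕ → (Fin l → ℝ) → ℂ)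
    (hcont : ∀ i, ContinuousOn (c i) T)
    (hlead : ∀ t ∈ T, c n t ≠ 0) :
    (∀ t ∈ T, Hurwitz (tPoly l n c t)) ↔
      ((∃ t0 ∈ T, Hurwitz (tPoly l n c t0)) ∧
        ∀ ω : ℝ, ∀ t ∈ T, Polynomial.eval ((ω : ℂ) * Complex.I) (tPoly l n c t) ≠ 0) :=
  zero_exclusion_principle_general l n T hTconn c hcont hlead
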